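/- arXiv:0901.4497 — 2 statements merged into one kernel-verified Lean document; each statement's English description precedes it below -/
import Mathlib

section
/- If K is a closed set in ℝⁿ that is not convex, then there exist two distinct points x̃, ỹ ∈ K such that the open segment between x̃ and ỹ is disjoint from K; in particular the midpoint (x̃+ỹ)/2 is not in K. -/
theorem nonconvex_closed_exists_gap (n : ℕ) (K : Set (Fin n → ℝ)) (hK : IsClosed K)
    (hnc : ¬ Convex ℝ K) :
    ∃ x ∈ K, ∃ y ∈ K, x ≠ y ∧
      (∀ l : ℝ, 0 < l → l < 1 → l • x + (1 - l) • y ∉ K) ∧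
      (1/2 : ℝ) • (x + y) ∉ K := by
  rw [convex_iff_forall_pos] at hnc
  push_neg at hnc
  obtain ⟨a, ha, b, hb, s, t, hs, ht, hst, hmem⟩ := hnc
  set f : ℝ → (Fin n → ℝ) := fun r => r • a + (1 - r) • b with hf
  have hfs : f s ∉ K := by
    have : (1 - s) = t := by linarith
    simpa [hf, this] using hmem
  have hs1 : s < 1 := by linarith
  have hcont : Continuous f := by
    simp only [hf]; fun_prop
  have hf0 : f 0 = b := by simp [hf]
  have hf1 : f 1 = a := by simp [hf]
  set S : Set ℝ := f ⁻¹' K ∩ Set.Icc 0 1 with hS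
  have hScl : IsClosed S := (hK.preimage hcont).inter isClosed_Icc
  set A := S ∩ Set.Icc 0 s with hA
  set B := S ∩ Set.Icc s 1 with hB
  have hAc : IsCompact A := isCompact_Icc.inter_left hScl
  have hBc : IsCompact B := isCompact_Icc.inter_left hScl
  have hAne : A.Nonempty := ⟨0, ⟨by simpa [hf0] using hb, by constructor <;> norm_num⟩,
    by constructor <;> [norm_num; linarith]⟩
  have hBne : B.Nonempty := ⟨1, ⟨by simpa [hf1] using ha, by constructor <;> norm_num⟩,
    by constructor <;> [linarith; norm_num]⟩
  have hu : sSup A ∈ A := hAc.sSup_mem hAne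
  have hv : sInf B ∈ B := hBc.sInf_mem hBne
  set u := sSup A
  set v := sInf B
  have hus : u < s := lt_of_le_of_ne hu.2.2 (fun h => hfs (h ▸ hu.1.1))
  have hsv : s < v := lt_of_le_of_ne hv.2.1 (fun h => hfs (h ▸ hv.1.1))
  have huv : u < v := hus.trans hsv
  have hu0 : 0 ≤ u := hu.2.1
  have hv1 : v ≤ 1 := hv.2.2
  have key : ∀ l : ℝ, l • f u + (1 - l) • f v = f (l * u + (1 - l) * v) := by
    intro l
    simp only [hf]
    module
  have main : ∀ l : ℝ, 0 < l → l < 1 → l • f u + (1 - l) • f v ∉ K := by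
    intro l hl0 hl1 hKmem
    rw [key] at hKmem
    set w := l * u + (1 - l) * v with hw
    have hwu : u < w := by nlinarith
    have hwv : w < v := by nlinarith
    have hwS : w ∈ S := ⟨hKmem, ⟨le_trans hu0 hwu.le, le_trans hwv.le hv1⟩⟩
    rcases le_total w s with h | h
    · have : w ≤ u := le_csSup hAc.bddAbove ⟨hwS, ⟨le_trans hu0 hwu.le, h⟩⟩
      linarith
    · have : v ≤ w := csInf_le hBc.bddBelow ⟨hwS, ⟨h, le_trans hwv.le hv1⟩⟩
      linarith
  refine ⟨f u, hu.1.1, f v, hv.1.1, ?_, main, ?_⟩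
  · intro h
    have h2 : (u - v) • (a - b) = f u - f v := by simp only [hf]; module
    rw [h, sub_self] at h2
    rcases smul_eq_zero.mp h2 with h3 | h3
    · have : u = v := by linarith [sub_eq_zero.mp h3]
      exact absurd this huv.ne
    · have hab : a = b := sub_eq_zero.mp h3
      apply hfs
      have : f s = b := by simp [hf, hab, ← add_smul]
      rw [this]; exact hb
  · have heq : (1/2 : ℝ) • (f u + f v) = (1/2 : ℝ) • f u + (1 - 1/2 : ℝ) • f v := by
      module
    rw [heq]
    exact main (1/2) (by norm_num) (by norm_num)
end

section
/- Let K = {x ∈ ℝⁿ : gⱼ(x) ≥ 0 for j = 1,…,m} with gⱼ real polynomials. Suppose for every j there exist functions σⱼ, hⱼ : ℝⁿ × ℝⁿ → ℝ that are nonnegative on K × K, and an integer pⱼ ≥ 1, such that σⱼ(x,y)·gⱼ((x+y)/2) = gⱼ((x+y)/2)^(2pⱼ) + hⱼ(x,y) for all x, y ∈ ℝⁿ. Then K is convex. -/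
open Set

theorem Real.ordConnected_of_isClosed_of_midpoint_mem {S : Set ℝ} (hS : IsClosed S)
    (hmid : ∀ a ∈ S, ∀ b ∈ S, midpoint ℝ a b ∈ S) : S.OrdConnected := by
  refine ⟨fun a ha b hb t ⟨hat, htb⟩ => ?_⟩
  by_contra ht
  -- The gap of `S` around `t` is bounded by points `l < t < u` of `S`, whose midpoint lies in the gap.
  set l := sSup (S ∩ Icc a t)
  set u := sInf (S ∩ Icc t b)
  have hl : l ∈ S ∩ Icc a t :=
    (hS.inter isClosed_Icc).csSup_mem ⟨a, ha, le_rfl, hat⟩ bddAbove_Icc.inter_of_right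
  have hu : u ∈ S ∩ Icc t b :=
    (hS.inter isClosed_Icc).csInf_mem ⟨b, hb, htb, le_rfl⟩ bddBelow_Icc.inter_of_right
  have hlt : l < t := lt_of_le_of_ne hl.2.2 fun h => ht (h ▸ hl.1)
  have htu : t < u := lt_of_le_of_ne hu.2.1 fun h => ht (h ▸ hu.1)
  have hm : midpoint ℝ l u ∈ S := hmid l hl.1 u hu.1
  rw [midpoint_eq_smul_add, smul_eq_mul, invOf_eq_inv] at hm
  rcases le_total ((2 : ℝ)⁻¹ * (l + u)) t with hmt | htm
  · have : (2 : ℝ)⁻¹ * (l + u) ≤ l :=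
      le_csSup bddAbove_Icc.inter_of_right ⟨hm, by linarith [hl.2.1], hmt⟩
    linarith
  · have : u ≤ (2 : ℝ)⁻¹ * (l + u) :=
      csInf_le bddBelow_Icc.inter_of_right ⟨hm, htm, by linarith [hu.2.2]⟩
    linarith

theorem convex_of_isClosed_of_midpoint_mem {E : Type*} [AddCommGroup E] [Module ℝ E]
    [TopologicalSpace E] [IsTopologicalAddGroup E] [ContinuousSMul ℝ E] {K : Set E}
    (hK : IsClosed K) (hmid : ∀ x ∈ K, ∀ y ∈ K, midpoint ℝ x y ∈ K) : Convex ℝ K := by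
  refine convex_iff_segment_subset.2 fun x hx y hy => ?_
  set T := AffineMap.lineMap (k := ℝ) x y ⁻¹' K
  have hT : T.OrdConnected := Real.ordConnected_of_isClosed_of_midpoint_mem
    (hK.preimage AffineMap.lineMap_continuous) fun a ha b hb => by
      simpa only [T, mem_preimage, AffineMap.map_midpoint] using hmid _ ha _ hb
  have h01 : Icc (0 : ℝ) 1 ⊆ T :=
    hT.out (by simpa [T] using hx) (by simpa [T] using hy)
  rw [segment_eq_image_lineMap]
  exact image_subset_iff.2 h01

theorem nonneg_of_mul_eq_even_pow_add {R : Type*} [Ring R] [LinearOrder R] [IsStrictOrderedRing R]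
    {s a h : R} (p : ℕ) (hs : 0 ≤ s) (hh : 0 ≤ h) (heq : s * a = a ^ (2 * p) + h) : 0 ≤ a := by
  by_contra! ha
  have hpow : 0 < a ^ (2 * p) := (even_two_mul p).pow_pos ha.ne
  have hsa : s * a ≤ 0 := mul_nonpos_of_nonneg_of_nonpos hs ha.le
  exact (heq ▸ hsa).not_gt (add_pos_of_pos_of_nonneg hpow hh)

theorem certificate_of_convexity (n m : ℕ) (g : Fin m → MvPolynomial (Fin n) ℝ)
    (K : Set (Fin n → ℝ)) (hK : K = {x | ∀ j, 0 ≤ MvPolynomial.eval x (g j)})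
    (hcert : ∀ j : Fin m, ∃ (σ h : (Fin n → ℝ) → (Fin n → ℝ) → ℝ) (p : ℕ), 1 ≤ p ∧
      (∀ x ∈ K, ∀ y ∈ K, 0 ≤ σ x y ∧ 0 ≤ h x y) ∧
      (∀ x y : Fin n → ℝ,
        σ x y * MvPolynomial.eval ((1/2 : ℝ) • (x + y)) (g j) =
          (MvPolynomial.eval ((1/2 : ℝ) • (x + y)) (g j)) ^ (2 * p) + h x y)) :
    Convex ℝ K := by
  refine convex_of_isClosed_of_midpoint_mem ?_ fun x hx y hy => ?_
  · rw [hK, ofPred_forall]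
    exact isClosed_iInter fun j => isClosed_le continuous_const (MvPolynomial.continuous_eval _)
  have hxy : midpoint ℝ x y = (1/2 : ℝ) • (x + y) := by
    rw [midpoint_eq_smul_add, invOf_eq_inv, one_div]
  rw [hK, mem_ofPred_eq, hxy]
  intro j
  obtain ⟨σ, h, p, -, hnonneg, heq⟩ := hcert j
  exact nonneg_of_mul_eq_even_pow_add p (hnonneg x hx y hy).1 (hnonneg x hx y hy).2 (heq x y)
end
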